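/- Let H be a Hopf algebra over a commutative ring k, R an H-module algebra, I an H-ideal of R, and x ∈ I an element that is H-regular in I (i.e., x = Σᵢ (hᵢ · x) bᵢ (hᵢ' · x) with all bᵢ ∈ I). Then the H-ideal of R generated by x coincides with the H-ideal of I generated by x; in particular R(H·x) ⊆ I(H·x) and (H·x)R ⊆ (H·x)I. -/

import Mathlib

open scoped TensorProduct

variable {k H R : Type*} [CommRing k] [Ring H] [HopfAlgebra k H]
  [NonUnitalRing R] [Module k R] [SMulCommClass k R R] [IsScalarTower k R R]

/-- `R` is an `H`-module algebra via the `k`-bilinear action `act`: the action is unital,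
makes `R` a left `H`-module, and satisfies `h · (a b) = ∑ (h₁ · a)(h₂ · b)`
(the right-hand side being the image of `Δ(h)` under `h₁ ⊗ h₂ ↦ (h₁ · a)(h₂ · b)`). -/
def IsModuleAlgebra (act : H →ₗ[k] R →ₗ[k] R) : Prop :=
  (∀ r : R, act 1 r = r) ∧
  (∀ (g h : H) (r : R), act (g * h) r = act g (act h r)) ∧
  (∀ (h : H) (a b : R),
    act h (a * b) =
      LinearMap.mul' k R
        (TensorProduct.map (act.flip a) (act.flip b) (Coalgebra.comul h)))

/-- `a` is `H`-(von Neumann) regular with middle factors taken from the set `S`: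
`a = ∑ᵢ (hᵢ · a) bᵢ (hᵢ' · a)` with all `bᵢ ∈ S`. -/
def IsHRegularIn (act : H →ₗ[k] R →ₗ[k] R) (S : Set R) (a : R) : Prop :=
  ∃ (n : ℕ) (h h' : Fin n → H) (b : Fin n → R),
    (∀ i, b i ∈ S) ∧ a = ∑ i, act (h i) a * b i * act (h' i) a

/-- `J` is an `H`-ideal of the `H`-module (sub)algebra `S` (take `S = Set.univ`
for `H`-ideals of `R` itself). -/
def IsHIdealIn (act : H →ₗ[k] R →ₗ[k] R) (S J : Set R) : Prop :=
  J ⊆ S ∧ (0 : R) ∈ J ∧ (∀ x ∈ J, ∀ y ∈ J, x - y ∈ J) ∧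
  (∀ (c : k), ∀ x ∈ J, c • x ∈ J) ∧
  (∀ s ∈ S, ∀ x ∈ J, s * x ∈ J ∧ x * s ∈ J) ∧
  (∀ (h : H), ∀ x ∈ J, act h x ∈ J)

/-- The `H`-ideal of `S` generated by `a`. -/
def HIdealGenIn (act : H →ₗ[k] R →ₗ[k] R) (S : Set R) (a : R) : Set R :=
  {x | ∀ J : Set R, IsHIdealIn act S J → a ∈ J → x ∈ J}

/-- The `H`-von Neumann regular radical `r_{Hn}` of the `H`-module (sub)algebra `S`:
those `a ∈ S` such that every element of the `H`-ideal of `S` generated by `a`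
is `H`-regular in `S`. -/
def rHnIn (act : H →ₗ[k] R →ₗ[k] R) (S : Set R) : Set R :=
  {a | a ∈ S ∧ ∀ x ∈ HIdealGenIn act S a, IsHRegularIn act S x}

/-!
Expanding `h · x = ∑ᵢ h · (((hᵢ · x) bᵢ) (hᵢ' · x))` by the module-algebra rule writes
`r (h · x)` as a sum of terms `(r (g · ((hᵢ · x) bᵢ))) (g' hᵢ' · x)` whose left factors lie in `I`;
symmetrically for `(h · x) r`. Consequently the `H`-ideal `K` of `I` generated by `x` absorbs
multiplication by `R`: the `z ∈ K` with `R (H · z) ⊆ K` and `(H · z) R ⊆ K` form an `H`-ideal of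
`I` containing `x`, hence exhaust `K`. Conversely, an `H`-ideal of `R` containing `x` meets `I`
in an `H`-ideal of `I` containing `x`.
-/

theorem AddSubmonoid.exists_fin_sum_of_mem_closure_range {ι M : Type*} [AddCommMonoid M]
    {f : ι → M} {z : M} (hz : z ∈ closure (Set.range f)) :
    ∃ (n : ℕ) (v : Fin n → ι), z = ∑ i, f (v i) := by
  obtain ⟨l, hl, rfl⟩ := exists_list_of_mem_closure hz
  choose v hv using fun i : Fin l.length => hl _ (l.get_mem i)
  exact ⟨l.length, v, by simp [hv, Fin.sum_univ_getElem]⟩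

namespace IsHIdealIn

omit [SMulCommClass k R R] [IsScalarTower k R R]

variable {act : H →ₗ[k] R →ₗ[k] R} {S T J I : Set R}

theorem subset (hJ : IsHIdealIn act S J) : J ⊆ S := hJ.1

theorem zero_mem (hJ : IsHIdealIn act S J) : (0 : R) ∈ J := hJ.2.1

theorem sub_mem (hJ : IsHIdealIn act S J) {y z : R} (hy : y ∈ J) (hz : z ∈ J) : y - z ∈ J :=
  hJ.2.2.1 y hy z hz

theorem smul_mem (hJ : IsHIdealIn act S J) (c : k) {z : R} (hz : z ∈ J) : c • z ∈ J :=
  hJ.2.2.2.1 c z hz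

theorem mul_mem_left (hJ : IsHIdealIn act S J) {s z : R} (hs : s ∈ S) (hz : z ∈ J) :
    s * z ∈ J :=
  (hJ.2.2.2.2.1 s hs z hz).1

theorem mul_mem_right (hJ : IsHIdealIn act S J) {s z : R} (hs : s ∈ S) (hz : z ∈ J) :
    z * s ∈ J :=
  (hJ.2.2.2.2.1 s hs z hz).2

theorem act_mem (hJ : IsHIdealIn act S J) (h : H) {z : R} (hz : z ∈ J) : act h z ∈ J :=
  hJ.2.2.2.2.2 h z hz

theorem add_mem (hJ : IsHIdealIn act S J) {y z : R} (hy : y ∈ J) (hz : z ∈ J) : y + z ∈ J := by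
  simpa using hJ.sub_mem hy (hJ.sub_mem hJ.zero_mem hz)

def toAddSubmonoid (hJ : IsHIdealIn act S J) : AddSubmonoid R where
  carrier := J
  add_mem' := hJ.add_mem
  zero_mem' := hJ.zero_mem

theorem sum_mem (hJ : IsHIdealIn act S J) {ι : Type*} {s : Finset ι} {f : ι → R}
    (hf : ∀ i ∈ s, f i ∈ J) : ∑ i ∈ s, f i ∈ J :=
  _root_.sum_mem (S := hJ.toAddSubmonoid) hf

theorem closure_subset (hJ : IsHIdealIn act S J) (hT : T ⊆ J) :
    (AddSubmonoid.closure T : Set R) ⊆ J :=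
  AddSubmonoid.closure_le (S := hJ.toAddSubmonoid).2 hT

theorem inter (hJ : IsHIdealIn act S J) (hI : IsHIdealIn act S I) :
    IsHIdealIn act S (J ∩ I) :=
  ⟨fun _ hz => hI.subset hz.2, ⟨hJ.zero_mem, hI.zero_mem⟩,
    fun _ hy _ hz => ⟨hJ.sub_mem hy.1 hz.1, hI.sub_mem hy.2 hz.2⟩,
    fun c _ hz => ⟨hJ.smul_mem c hz.1, hI.smul_mem c hz.2⟩,
    fun _ hs _ hz => ⟨⟨hJ.mul_mem_left hs hz.1, hI.mul_mem_left hs hz.2⟩,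
      ⟨hJ.mul_mem_right hs hz.1, hI.mul_mem_right hs hz.2⟩⟩,
    fun h _ hz => ⟨hJ.act_mem h hz.1, hI.act_mem h hz.2⟩⟩

theorem mono (hJ : IsHIdealIn act S J) (hJT : J ⊆ T) (hTS : T ⊆ S) : IsHIdealIn act T J :=
  ⟨hJT, hJ.zero_mem, fun _ hy _ hz => hJ.sub_mem hy hz, fun c _ hz => hJ.smul_mem c hz,
    fun _ hs _ hz => ⟨hJ.mul_mem_left (hTS hs) hz, hJ.mul_mem_right (hTS hs) hz⟩,
    fun h _ hz => hJ.act_mem h hz⟩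

theorem univ_of_mul_mem (hJ : IsHIdealIn act S J)
    (hmul : ∀ z ∈ J, ∀ r : R, r * z ∈ J ∧ z * r ∈ J) : IsHIdealIn act Set.univ J :=
  ⟨Set.subset_univ J, hJ.zero_mem, fun _ hy _ hz => hJ.sub_mem hy hz,
    fun c _ hz => hJ.smul_mem c hz, fun r _ z hz => hmul z hz r, fun h _ hz => hJ.act_mem h hz⟩

end IsHIdealIn

section HIdealGenIn

omit [SMulCommClass k R R] [IsScalarTower k R R]

variable {act : H →ₗ[k] R →ₗ[k] R} {S J : Set R} {a : R}

theorem mem_hIdealGenIn_self : a ∈ HIdealGenIn act S a := fun _ _ ha => ha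

theorem hIdealGenIn_subset (hJ : IsHIdealIn act S J) (ha : a ∈ J) : HIdealGenIn act S a ⊆ J :=
  fun _ hz => hz J hJ ha

theorem isHIdealIn_hIdealGenIn (hS : IsHIdealIn act S S) (ha : a ∈ S) :
    IsHIdealIn act S (HIdealGenIn act S a) :=
  ⟨hIdealGenIn_subset hS ha, fun _ hJ _ => hJ.zero_mem,
    fun _ hy _ hz J hJ haJ => hJ.sub_mem (hy J hJ haJ) (hz J hJ haJ),
    fun c _ hz J hJ haJ => hJ.smul_mem c (hz J hJ haJ),
    fun _ hs _ hz => ⟨fun J hJ haJ => hJ.mul_mem_left hs (hz J hJ haJ),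
      fun J hJ haJ => hJ.mul_mem_right hs (hz J hJ haJ)⟩,
    fun h _ hz J hJ haJ => hJ.act_mem h (hz J hJ haJ)⟩

end HIdealGenIn

namespace IsModuleAlgebra

variable {act : H →ₗ[k] R →ₗ[k] R}

theorem one_act (hma : IsModuleAlgebra act) (r : R) : act 1 r = r := hma.1 r

theorem mul_act (hma : IsModuleAlgebra act) (g h : H) (r : R) :
    act (g * h) r = act g (act h r) :=
  hma.2.1 g h r

theorem exists_act_mul_eq_sum (hma : IsModuleAlgebra act) (h : H) :
    ∃ s : Finset (H × H), ∀ u v : R, act h (u * v) = ∑ p ∈ s, act p.1 u * act p.2 v := by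
  obtain ⟨s, hs⟩ := TensorProduct.exists_finset (R := k) (Coalgebra.comul h)
  refine ⟨s, fun u v => ?_⟩
  simp [hma.2.2, hs, LinearMap.mul'_apply]

end IsModuleAlgebra

namespace IsHRegularIn

variable {act : H →ₗ[k] R →ₗ[k] R} {I : Set R} {x : R}

theorem mul_act_mem_closure (hma : IsModuleAlgebra act) (hI : IsHIdealIn act Set.univ I)
    (hreg : IsHRegularIn act I x) (r : R) (h : H) :
    r * act h x ∈ AddSubmonoid.closure (Set.range fun p : I × H => (p.1 : R) * act p.2 x) := by
  obtain ⟨n, g, g', b, hb, hx⟩ := hreg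
  obtain ⟨s, hs⟩ := hma.exists_act_mul_eq_sum h
  have hexp : act h x = ∑ i, ∑ p ∈ s, act p.1 (act (g i) x * b i) * act (p.2 * g' i) x := by
    conv_lhs => rw [hx]
    simp only [map_sum, hs, hma.mul_act]
  rw [hexp, Finset.mul_sum]
  refine sum_mem fun i _ => ?_
  rw [Finset.mul_sum]
  refine sum_mem fun p _ => AddSubmonoid.subset_closure ?_
  have hc : r * act p.1 (act (g i) x * b i) ∈ I :=
    hI.mul_mem_left trivial (hI.act_mem _ (hI.mul_mem_left trivial (hb i)))
  exact ⟨(⟨_, hc⟩, p.2 * g' i), mul_assoc _ _ _⟩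

theorem act_mul_mem_closure (hma : IsModuleAlgebra act) (hI : IsHIdealIn act Set.univ I)
    (hreg : IsHRegularIn act I x) (r : R) (h : H) :
    act h x * r ∈ AddSubmonoid.closure (Set.range fun p : I × H => act p.2 x * (p.1 : R)) := by
  obtain ⟨n, g, g', b, hb, hx⟩ := hreg
  obtain ⟨s, hs⟩ := hma.exists_act_mul_eq_sum h
  have hexp : act h x = ∑ i, ∑ p ∈ s, act (p.1 * g i) x * act p.2 (b i * act (g' i) x) := by
    conv_lhs => rw [hx]
    simp only [map_sum, mul_assoc, hs, hma.mul_act]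
  rw [hexp, Finset.sum_mul]
  refine sum_mem fun i _ => ?_
  rw [Finset.sum_mul]
  refine sum_mem fun p _ => AddSubmonoid.subset_closure ?_
  have hc : act p.2 (b i * act (g' i) x) * r ∈ I :=
    hI.mul_mem_right trivial (hI.act_mem _ (hI.mul_mem_right trivial (hb i)))
  exact ⟨(⟨_, hc⟩, p.1 * g i), (mul_assoc _ _ _).symm⟩

end IsHRegularIn

namespace IsHIdealIn

variable {act : H →ₗ[k] R →ₗ[k] R} {I K : Set R}

theorem setOf_forall_mul_act_mem (hma : IsModuleAlgebra act) (hI : IsHIdealIn act Set.univ I)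
    (hK : IsHIdealIn act I K) :
    IsHIdealIn act I {z | z ∈ K ∧ ∀ (r : R) (h : H), r * act h z ∈ K ∧ act h z * r ∈ K} := by
  refine ⟨fun z hz => hK.subset hz.1, ⟨hK.zero_mem, by simp [hK.zero_mem]⟩,
    fun y hy z hz => ⟨hK.sub_mem hy.1 hz.1, fun r h => ?_⟩,
    fun c z hz => ⟨hK.smul_mem c hz.1, fun r h => ?_⟩,
    fun s hs z hz => ⟨⟨hK.mul_mem_left hs hz.1, fun r h => ?_⟩,
      ⟨hK.mul_mem_right hs hz.1, fun r h => ?_⟩⟩,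
    fun g z hz => ⟨hK.act_mem g hz.1, fun r h => by simpa only [hma.mul_act] using hz.2 r (h * g)⟩⟩
  · rw [map_sub, mul_sub, sub_mul]
    exact ⟨hK.sub_mem (hy.2 r h).1 (hz.2 r h).1, hK.sub_mem (hy.2 r h).2 (hz.2 r h).2⟩
  · rw [map_smul, mul_smul_comm, smul_mul_assoc]
    exact ⟨hK.smul_mem c (hz.2 r h).1, hK.smul_mem c (hz.2 r h).2⟩
  all_goals obtain ⟨t, ht⟩ := hma.exists_act_mul_eq_sum h
  · rw [ht, Finset.mul_sum, Finset.sum_mul]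
    refine ⟨hK.sum_mem fun p _ => ?_, hK.sum_mem fun p _ => ?_⟩
    · rw [← mul_assoc]
      exact (hz.2 _ p.2).1
    · rw [mul_assoc]
      exact hK.mul_mem_left (hI.act_mem p.1 hs) (hz.2 r p.2).2
  · rw [ht, Finset.mul_sum, Finset.sum_mul]
    refine ⟨hK.sum_mem fun p _ => ?_, hK.sum_mem fun p _ => ?_⟩
    · rw [← mul_assoc]
      exact hK.mul_mem_right (hI.act_mem p.2 hs) (hz.2 r p.1).1
    · rw [mul_assoc]
      exact (hz.2 _ p.1).2

end IsHIdealIn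

omit [SMulCommClass k R R] [IsScalarTower k R R] in
theorem hIdealGenIn_subset_hIdealGenIn_univ {act : H →ₗ[k] R →ₗ[k] R} {I : Set R} {x : R}
    (hI : IsHIdealIn act Set.univ I) (hx : x ∈ I) :
    HIdealGenIn act I x ⊆ HIdealGenIn act Set.univ x := fun _ hz _ hJ hxJ =>
  (hIdealGenIn_subset ((hJ.inter hI).mono Set.inter_subset_right (Set.subset_univ I))
    ⟨hxJ, hx⟩ hz).1

theorem IsHRegularIn.isHIdealIn_univ_hIdealGenIn {act : H →ₗ[k] R →ₗ[k] R} {I : Set R} {x : R}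
    (hma : IsModuleAlgebra act) (hI : IsHIdealIn act Set.univ I) (hx : x ∈ I)
    (hreg : IsHRegularIn act I x) : IsHIdealIn act Set.univ (HIdealGenIn act I x) := by
  have hK : IsHIdealIn act I (HIdealGenIn act I x) :=
    isHIdealIn_hIdealGenIn (hI.mono subset_rfl (Set.subset_univ I)) hx
  have hxK : x ∈ HIdealGenIn act I x := mem_hIdealGenIn_self
  have hx_absorbed : ∀ (r : R) (h : H),
      r * act h x ∈ HIdealGenIn act I x ∧ act h x * r ∈ HIdealGenIn act I x := by
    have hl : Set.range (fun p : I × H => (p.1 : R) * act p.2 x) ⊆ HIdealGenIn act I x :=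
      Set.range_subset_iff.2 fun p => hK.mul_mem_left p.1.2 (hK.act_mem p.2 hxK)
    have hr : Set.range (fun p : I × H => act p.2 x * (p.1 : R)) ⊆ HIdealGenIn act I x :=
      Set.range_subset_iff.2 fun p => hK.mul_mem_right p.1.2 (hK.act_mem p.2 hxK)
    exact fun r h => ⟨hK.closure_subset hl (hreg.mul_act_mem_closure hma hI r h),
      hK.closure_subset hr (hreg.act_mul_mem_closure hma hI r h)⟩
  have hK_absorbed :=
    hIdealGenIn_subset (IsHIdealIn.setOf_forall_mul_act_mem hma hI hK) ⟨hxK, hx_absorbed⟩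
  refine hK.univ_of_mul_mem fun z hz r => ?_
  simpa only [hma.one_act] using (hK_absorbed hz).2 r 1

theorem hIdealGen_eq_of_isHRegularIn
    (act : H →ₗ[k] R →ₗ[k] R) (hma : IsModuleAlgebra act)
    (I : Set R) (hI : IsHIdealIn act Set.univ I)
    (x : R) (hx : x ∈ I) (hreg : IsHRegularIn act I x) :
    HIdealGenIn act Set.univ x = HIdealGenIn act I x ∧
    (∀ (r : R) (h : H), ∃ (n : ℕ) (c : Fin n → R) (g : Fin n → H),
      (∀ i, c i ∈ I) ∧ r * act h x = ∑ i, c i * act (g i) x) ∧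
    (∀ (r : R) (h : H), ∃ (n : ℕ) (c : Fin n → R) (g : Fin n → H),
      (∀ i, c i ∈ I) ∧ act h x * r = ∑ i, act (g i) x * c i) := by
  refine ⟨subset_antisymm ?_ (hIdealGenIn_subset_hIdealGenIn_univ hI hx), fun r h => ?_,
    fun r h => ?_⟩
  · exact hIdealGenIn_subset (hreg.isHIdealIn_univ_hIdealGenIn hma hI hx) mem_hIdealGenIn_self
  · obtain ⟨n, v, hv⟩ := AddSubmonoid.exists_fin_sum_of_mem_closure_range
      (hreg.mul_act_mem_closure hma hI r h)
    exact ⟨n, fun i => (v i).1, fun i => (v i).2, fun i => (v i).1.2, hv⟩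
  · obtain ⟨n, v, hv⟩ := AddSubmonoid.exists_fin_sum_of_mem_closure_range
      (hreg.act_mul_mem_closure hma hI r h)
    exact ⟨n, fun i => (v i).1, fun i => (v i).2, fun i => (v i).1.2, hv⟩
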